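/- Under the stochastic sampling design and kernel conditions, assume g is continuous at 0, h_j → 0 for each j, and n·h_1⋯h_d → ∞. Then the kernel density estimator ĝ(0) := (n h_1⋯h_d)^{−1}·Σ_{i=1}^n K_{Ah}(X_i) converges in probability to g(0) as n → ∞. -/

import Mathlib

/-!
Write `Y_i = K_{Ah}(X_i)`. The substitution `x = A h z` turns the density `A⁻¹ g(x/A)` of `X_i`
into `E Y_i = h₁⋯h_d ∫ g(h z) K(z) dz` and `E Y_i² = h₁⋯h_d ∫ g(h z) K(z)² dz`. Hence `ĝ(0)` has
mean `∫ g(h z) K(z) dz`, which tends to `g(0) ∫ K = g(0)` by dominated convergence because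
`h → 0` and `g` is bounded and continuous at `0`, and, by independence, variance at most
`sup g · ∫ K² / (n h₁⋯h_d) → 0`. Chebyshev's inequality concludes.
-/

set_option autoImplicit false

open MeasureTheory ProbabilityTheory Filter Topology

noncomputable section

/-- `x/A_n`, componentwise rescaling. -/
def scaled {d : ℕ} (A x : Fin d → ℝ) : Fin d → ℝ := fun j => x j / A j

/-- `K_{Ah}(x) = K(x₁/(A₁h₁),…,x_d/(A_dh_d))`. -/
def KAh {d : ℕ} (K : (Fin d → ℝ) → ℝ) (A h x : Fin d → ℝ) : ℝ :=
  K fun j => x j / (A j * h j)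

/-- The cube `R₀ = [−1/2,1/2]^d`. -/
def R0 (d : ℕ) : Set (Fin d → ℝ) :=
  Set.Icc (fun _ => -(1/2 : ℝ)) (fun _ => (1/2 : ℝ))

/-- `ĝ(0)`, from the sites `X 0, …, X (n-1)`. -/
def kde {Ω : Type*} {d : ℕ} (K : (Fin d → ℝ) → ℝ) (A h : Fin d → ℝ) (n : ℕ)
    (X : ℕ → Ω → Fin d → ℝ) (ω : Ω) : ℝ :=
  1 / ((n : ℝ) * ∏ j, h j) * ∑ i ∈ Finset.range n, KAh K A h (X i ω)

section Probability

variable {ι Ω : Type*} [MeasurableSpace Ω] {P : Measure Ω}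

lemma variance_const_mul_sum_le {Y : ι → Ω → ℝ} {s : Finset ι}
    (hY : ∀ i ∈ s, MemLp (Y i) 2 P)
    (hindep : Set.Pairwise ↑s fun i j => IndepFun (Y i) (Y j) P)
    (c : ℝ) {v : ℝ} (hv : ∀ i ∈ s, variance (Y i) P ≤ v) :
    variance (fun ω => c * ∑ i ∈ s, Y i ω) P ≤ c ^ 2 * (s.card * v) := by
  have hsum : variance (fun ω => ∑ i ∈ s, Y i ω) P = ∑ i ∈ s, variance (Y i) P := by
    rw [← IndepFun.variance_sum hY hindep]
    congr 1
    funext ω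
    exact (Finset.sum_apply ω s Y).symm
  rw [variance_const_mul, hsum]
  gcongr
  simpa only [Finset.sum_const, nsmul_eq_mul] using Finset.sum_le_sum hv

lemma tendsto_measure_lt_abs_sub_of_tendsto_variance [IsFiniteMeasure P] {l : Filter ι}
    {G : ι → Ω → ℝ} {a : ℝ} (hG : ∀ i, MemLp (G i) 2 P)
    (hmean : Tendsto (fun i => P[G i]) l (𝓝 a))
    (hvar : Tendsto (fun i => variance (G i) P) l (𝓝 0)) {δ : ℝ} (hδ : 0 < δ) :
    Tendsto (fun i => (P {ω | δ < |G i ω - a|}).toReal) l (𝓝 0) := by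
  have hchebyshev : ∀ᶠ i in l,
      (P {ω | δ < |G i ω - a|}).toReal ≤ variance (G i) P / (δ / 2) ^ 2 := by
    filter_upwards [Metric.tendsto_nhds.1 hmean (δ / 2) (half_pos hδ)] with i hi
    have hsub : {ω | δ < |G i ω - a|} ⊆ {ω | δ / 2 ≤ |G i ω - P[G i]|} :=
      fun ω (hω : δ < |G i ω - a|) => by
        show δ / 2 ≤ _
        rw [Real.dist_eq] at hi
        linarith [abs_sub_le (G i ω) P[G i] a]
    refine ENNReal.toReal_le_of_le_ofReal (div_nonneg (variance_nonneg _ _) (sq_nonneg _)) ?_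
    exact (measure_mono hsub).trans (meas_ge_le_variance_div_sq (hG i) (half_pos hδ))
  have hbound := hvar.div_const ((δ / 2) ^ 2)
  rw [zero_div] at hbound
  exact squeeze_zero' (.of_forall fun _ => ENNReal.toReal_nonneg) hchebyshev hbound

end Probability

section ChangeOfVariables

variable {ι : Type*} [Fintype ι]

lemma map_div_volume_pi {c : ι → ℝ} (hc : ∀ j, 0 < c j) :
    Measure.map (fun x : ι → ℝ => fun j => x j / c j) volume
      = ENNReal.ofReal (∏ j, c j) • volume := by
  classical
  set L := Matrix.toLin' (Matrix.diagonal fun j => (c j)⁻¹)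
  have hL : (fun x : ι → ℝ => fun j => x j / c j) = ⇑L := by
    funext x j
    simp [L, Matrix.toLin'_apply, Matrix.mulVec_diagonal, div_eq_inv_mul]
  have hdet : LinearMap.det L = (∏ j, c j)⁻¹ := by
    rw [LinearMap.det_toLin', Matrix.det_diagonal, Finset.prod_inv_distrib]
  have hprod : 0 < ∏ j, c j := Finset.prod_pos fun j _ => hc j
  rw [hL, Real.map_linearMap_volume_pi_eq_smul_volume_pi (by simp [hdet, hprod.ne']), hdet,
    inv_inv, abs_of_pos hprod]

lemma integral_comp_div_pi {c : ι → ℝ} (hc : ∀ j, 0 < c j) {ψ : (ι → ℝ) → ℝ}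
    (hψ : Measurable ψ) :
    ∫ x : ι → ℝ, ψ (fun j => x j / c j) = (∏ j, c j) * ∫ z, ψ z := by
  have hdiv : Measurable fun x : ι → ℝ => fun j => x j / c j := by fun_prop
  rw [← integral_map hdiv.aemeasurable hψ.aestronglyMeasurable, map_div_volume_pi hc,
    integral_smul_measure, ENNReal.toReal_ofReal (Finset.prod_nonneg fun j _ => (hc j).le),
    smul_eq_mul]

end ChangeOfVariables

lemma integral_comp_div_of_map_eq_withDensity {Ω : Type*} [MeasurableSpace Ω] {P : Measure Ω}
    {d : ℕ} {A h : Fin d → ℝ} (hA : ∀ j, 0 < A j) (hh : ∀ j, 0 < h j)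
    {X : Ω → Fin d → ℝ} (hX : Measurable X) {g : (Fin d → ℝ) → ℝ} (hg : Measurable g)
    (hg0 : ∀ x, 0 ≤ g x)
    (hXdens : Measure.map X P = volume.withDensity (fun x =>
        ENNReal.ofReal ((∏ j, A j)⁻¹ * g (scaled A x))))
    {φ : (Fin d → ℝ) → ℝ} (hφ : Measurable φ) :
    ∫ ω, φ (fun j => X ω j / (A j * h j)) ∂P
      = (∏ j, h j) * ∫ z, g (fun j => h j * z j) * φ z := by
  have hAh : ∀ j, 0 < A j * h j := fun j => mul_pos (hA j) (hh j)
  have hdiv : Measurable fun (x : Fin d → ℝ) (j : Fin d) => x j / (A j * h j) := by fun_prop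
  have hscaled : ∀ x : Fin d → ℝ,
      scaled A x = fun j => h j * (x j / (A j * h j)) := fun x => by
    funext j
    simp only [scaled]
    field_simp [(hA j).ne', (hh j).ne']
  have hdensity : Measurable fun x => (∏ j, A j)⁻¹ * g (scaled A x) := by
    unfold scaled; fun_prop
  have hpush : ∫ ω, φ (fun j => X ω j / (A j * h j)) ∂P
      = ∫ x, φ (fun j => x j / (A j * h j)) ∂(Measure.map X P) :=
    (integral_map hX.aemeasurable (hφ.comp hdiv).aestronglyMeasurable).symm
  rw [hpush, hXdens,
    integral_withDensity_eq_integral_toReal_smul hdensity.ennreal_ofReal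
      (ae_of_all _ fun _ => ENNReal.ofReal_lt_top)]
  simp only [hscaled, smul_eq_mul]
  rw [integral_comp_div_pi hAh (ψ := fun z => ENNReal.toReal (ENNReal.ofReal
      ((∏ j, A j)⁻¹ * g (fun j => h j * z j))) * φ z) (by fun_prop)]
  simp only [ENNReal.toReal_ofReal (mul_nonneg (inv_nonneg.2 (Finset.prod_nonneg
    fun j _ => (hA j).le)) (hg0 _)), mul_assoc, integral_const_mul, Finset.prod_mul_distrib]
  field_simp [(Finset.prod_pos fun j _ => hA j).ne']

lemma integrable_of_abs_le_of_eq_zero_off {α : Type*} [MeasurableSpace α] {μ : Measure α}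
    {f : α → ℝ} {s : Set α} (hs : μ s < ⊤) (hf : AEStronglyMeasurable f μ) {C : ℝ}
    (hfC : ∀ x, |f x| ≤ C) (hf0 : ∀ x ∉ s, f x = 0) : Integrable f μ :=
  (integrableOn_iff_integrable_of_support_subset fun x hx => not_imp_comm.1 (hf0 x) hx).1
    (IntegrableOn.of_bound hs hf.restrict C (ae_of_all _ hfC))

lemma integral_mul_le_of_le {α : Type*} [MeasurableSpace α] {μ : Measure α} {f ψ : α → ℝ}
    {C : ℝ} (hf0 : ∀ x, 0 ≤ f x) (hfC : ∀ x, f x ≤ C) (hψ0 : ∀ x, 0 ≤ ψ x)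
    (hψ : Integrable ψ μ) : ∫ x, f x * ψ x ∂μ ≤ C * ∫ x, ψ x ∂μ := by
  rw [← integral_const_mul]
  exact integral_mono_of_nonneg (ae_of_all _ fun x => mul_nonneg (hf0 x) (hψ0 x))
    (hψ.const_mul C) (ae_of_all _ fun x => mul_le_mul_of_nonneg_right (hfC x) (hψ0 x))

lemma tendsto_integral_comp_mul_mul {ι : Type*} [Fintype ι] {h : ℕ → ι → ℝ}
    (hh : Tendsto h atTop (𝓝 0)) {g K : (ι → ℝ) → ℝ} (hg : Measurable g) {Cg : ℝ}
    (hgbd : ∀ x, |g x| ≤ Cg) (hgcont : ContinuousAt g 0) (hK : Integrable K)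
    (hKint : ∫ z, K z = 1) :
    Tendsto (fun n => ∫ z, g (fun j => h n j * z j) * K z) atTop (𝓝 (g 0)) := by
  have hlim : Tendsto (fun n => ∫ z, g (fun j => h n j * z j) * K z) atTop
      (𝓝 (∫ z, g 0 * K z)) := by
    refine tendsto_integral_of_dominated_convergence (fun z => Cg * |K z|)
      (fun n => ((hg.comp (by fun_prop)).aestronglyMeasurable).mul hK.aestronglyMeasurable)
      (hK.abs.const_mul Cg) (fun n => ae_of_all _ fun z => ?_) (ae_of_all _ fun z => ?_)
    · rw [Real.norm_eq_abs, abs_mul]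
      exact mul_le_mul_of_nonneg_right (hgbd _) (abs_nonneg _)
    · have hscale : Tendsto (fun n => h n * z) atTop (𝓝 0) := by
        simpa using hh.mul_const z
      exact (hgcont.tendsto.comp hscale).mul_const (K z)
  rwa [integral_const_mul, hKint, mul_one] at hlim

section KernelDensityEstimator

variable {Ω : Type*} [MeasurableSpace Ω] {P : Measure Ω} [IsProbabilityMeasure P] {d : ℕ}
  {K g : (Fin d → ℝ) → ℝ} {A h : Fin d → ℝ} {X : ℕ → Ω → Fin d → ℝ}

lemma measurable_KAh (hK : Measurable K) : Measurable (KAh K A h) :=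
  hK.comp (f := fun (x : Fin d → ℝ) j => x j / (A j * h j)) (by fun_prop)

lemma memLp_KAh_comp (hX : ∀ i, Measurable (X i)) (hK : Measurable K) {CK : ℝ}
    (hKbd : ∀ z, |K z| ≤ CK) (i : ℕ) : MemLp (fun ω => KAh K A h (X i ω)) 2 P :=
  MemLp.of_bound ((measurable_KAh hK).comp (hX i)).aestronglyMeasurable CK
    (ae_of_all _ fun _ => hKbd _)

lemma memLp_kde (hX : ∀ i, Measurable (X i)) (hK : Measurable K) {CK : ℝ}
    (hKbd : ∀ z, |K z| ≤ CK) (n : ℕ) : MemLp (kde K A h n X) 2 P := by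
  have hsum := memLp_finsetSum' (Finset.range n) fun i _ => memLp_KAh_comp (A := A) (h := h)
    (P := P) hX hK hKbd i
  convert hsum.const_mul (1 / ((n : ℝ) * ∏ j, h j)) using 1
  funext ω
  simp only [kde, Finset.sum_apply]

lemma integral_kde {n : ℕ} (hn : n ≠ 0) (hA : ∀ j, 0 < A j) (hh : ∀ j, 0 < h j)
    (hX : ∀ i, Measurable (X i)) (hg : Measurable g) (hg0 : ∀ x, 0 ≤ g x)
    (hXdens : ∀ i < n, Measure.map (X i) P = volume.withDensity (fun x =>
        ENNReal.ofReal ((∏ j, A j)⁻¹ * g (scaled A x))))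
    (hK : Measurable K) {CK : ℝ} (hKbd : ∀ z, |K z| ≤ CK) :
    P[kde K A h n X] = ∫ z, g (fun j => h j * z j) * K z := by
  have hmean : ∀ i ∈ Finset.range n, ∫ ω, KAh K A h (X i ω) ∂P
      = (∏ j, h j) * ∫ z, g (fun j => h j * z j) * K z := fun i hi =>
    integral_comp_div_of_map_eq_withDensity hA hh (hX i) hg hg0
      (hXdens i (Finset.mem_range.1 hi)) hK
  have hH : ∏ j, h j ≠ 0 := (Finset.prod_pos fun j _ => hh j).ne'
  simp only [kde]
  rw [integral_const_mul, integral_finsetSum _ fun i _ =>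
      (memLp_KAh_comp hX hK hKbd i).integrable one_le_two,
    Finset.sum_congr rfl hmean, Finset.sum_const, Finset.card_range, nsmul_eq_mul]
  field_simp

lemma variance_kde_le {n : ℕ} (hA : ∀ j, 0 < A j) (hh : ∀ j, 0 < h j)
    (hX : ∀ i, Measurable (X i)) (hXindep : iIndepFun (fun i : Fin n => X i) P)
    (hg : Measurable g) (hg0 : ∀ x, 0 ≤ g x) {Cg : ℝ} (hgbd : ∀ x, g x ≤ Cg)
    (hXdens : ∀ i < n, Measure.map (X i) P = volume.withDensity (fun x =>
        ENNReal.ofReal ((∏ j, A j)⁻¹ * g (scaled A x))))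
    (hK : Measurable K) {CK : ℝ} (hKbd : ∀ z, |K z| ≤ CK)
    (hK2 : Integrable fun z => K z ^ 2) :
    variance (kde K A h n X) P ≤ Cg * (∫ z, K z ^ 2) / (n * ∏ j, h j) := by
  have hindep : Set.Pairwise ↑(Finset.range n)
      fun i j => IndepFun (fun ω => KAh K A h (X i ω)) (fun ω => KAh K A h (X j ω)) P := by
    intro i hi j hj hij
    have hXij := hXindep.indepFun (i := ⟨i, Finset.mem_range.1 hi⟩)
      (j := ⟨j, Finset.mem_range.1 hj⟩) (by simpa [Fin.ext_iff] using hij)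
    exact hXij.comp (measurable_KAh hK) (measurable_KAh hK)
  have hvar : ∀ i ∈ Finset.range n, variance (fun ω => KAh K A h (X i ω)) P
      ≤ (∏ j, h j) * (Cg * ∫ z, K z ^ 2) := fun i hi => calc
    _ ≤ ∫ ω, KAh K A h (X i ω) ^ 2 ∂P :=
      variance_le_expectation_sq ((measurable_KAh hK).comp (hX i)).aestronglyMeasurable
    _ = (∏ j, h j) * ∫ z, g (fun j => h j * z j) * K z ^ 2 :=
      integral_comp_div_of_map_eq_withDensity hA hh (hX i) hg hg0
        (hXdens i (Finset.mem_range.1 hi)) (hK.pow_const 2)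
    _ ≤ (∏ j, h j) * (Cg * ∫ z, K z ^ 2) :=
      mul_le_mul_of_nonneg_left
        (integral_mul_le_of_le (fun _ => hg0 _) (fun _ => hgbd _) (fun _ => sq_nonneg _) hK2)
        (Finset.prod_nonneg fun j _ => (hh j).le)
  refine (variance_const_mul_sum_le (fun i _ => memLp_KAh_comp hX hK hKbd i) hindep _ hvar).trans
    (le_of_eq ?_)
  rw [Finset.card_range]
  field_simp

end KernelDensityEstimator

theorem kernel_density_estimator_consistent_general
    {Ω : Type*} [MeasurableSpace Ω] (P : Measure Ω) [IsProbabilityMeasure P]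
    (d : ℕ)
    (A h : ℕ → Fin d → ℝ)
    (hApos : ∀ n j, 0 < A n j) (hhpos : ∀ n j, 0 < h n j)
    (hh0 : ∀ j, Tendsto (fun n => h n j) atTop (𝓝 0))
    (hnh : Tendsto (fun n : ℕ => (n : ℝ) * ∏ j, h n j) atTop atTop)
    (X : ℕ → ℕ → Ω → (Fin d → ℝ))
    (hXmeas : ∀ n i, Measurable (X n i))
    (g : (Fin d → ℝ) → ℝ)
    (hgmeas : Measurable g) (Cg : ℝ) (hgbd : ∀ x, |g x| ≤ Cg)
    (hgnonneg : ∀ x, 0 ≤ g x)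
    (hgcont : ContinuousAt g 0)
    (hXdens : ∀ n i, i < n → Measure.map (X n i) P =
      volume.withDensity (fun x =>
        ENNReal.ofReal ((∏ j, A n j)⁻¹ * g (scaled (A n) x))))
    (hXindep : ∀ n, iIndepFun (fun i : Fin n => X n i) P)
    (K : (Fin d → ℝ) → ℝ)
    (hKmeas : Measurable K) (CK : ℝ) (hKbd : ∀ z, |K z| ≤ CK)
    (hKsupp : ∀ z, z ∉ R0 d → K z = 0)
    (hKint : ∫ z : Fin d → ℝ, K z = 1) :
    ∀ δ : ℝ, 0 < δ →
      Tendsto (fun n : ℕ =>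
          (P {ω | δ < |(1 / ((n : ℝ) * ∏ j, h n j)) *
              (∑ i ∈ Finset.range n, KAh K (A n) (h n) (X n i ω)) - g 0|}).toReal)
        atTop (𝓝 0) := by
  intro δ hδ
  have hR0 : volume (R0 d) < ⊤ := isCompact_Icc.measure_lt_top
  have hK : Integrable K :=
    integrable_of_abs_le_of_eq_zero_off hR0 hKmeas.aestronglyMeasurable hKbd hKsupp
  have hK2 : Integrable fun z => K z ^ 2 :=
    integrable_of_abs_le_of_eq_zero_off hR0 (hKmeas.pow_const 2).aestronglyMeasurable
      (fun z => by simpa only [abs_pow] using pow_le_pow_left₀ (abs_nonneg _) (hKbd z) 2)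
      (fun z hz => by rw [hKsupp z hz, zero_pow two_ne_zero])
  refine tendsto_measure_lt_abs_sub_of_tendsto_variance
    (G := fun n => kde K (A n) (h n) n (X n)) (fun n => memLp_kde (hXmeas n) hKmeas hKbd n)
    ?_ ?_ hδ
  · refine (tendsto_integral_comp_mul_mul (tendsto_pi_nhds.2 hh0) hgmeas hgbd hgcont hK
      hKint).congr' ?_
    filter_upwards [eventually_ne_atTop 0] with n hn
    exact (integral_kde hn (hApos n) (hhpos n) (hXmeas n) hgmeas hgnonneg (hXdens n) hKmeas
      hKbd).symm
  · have hbound := hnh.inv_tendsto_atTop.const_mul (Cg * ∫ z, K z ^ 2)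
    rw [mul_zero] at hbound
    refine squeeze_zero (fun n => variance_nonneg _ _) (fun n => ?_) hbound
    exact variance_kde_le (hApos n) (hhpos n) (hXmeas n) (hXindep n) hgmeas hgnonneg
      (fun x => (le_abs_self _).trans (hgbd x)) (hXdens n) hKmeas hKbd hK2

/-- under the stochastic sampling design (i.i.d. sites with density
`A_n^{−1} g(·/A_n)`, `g` bounded measurable supported on `R₀`, continuous at 0) and
kernel conditions (`K` bounded measurable supported in `[−1/2,1/2]^d`, `∫K = 1`),
if `h_j → 0` and `n h₁⋯h_d → ∞`, the kernel density estimator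
`ĝ(0) = (n h₁⋯h_d)^{−1} Σᵢ K_{Ah}(Xᵢ)` converges in probability to `g(0)`. -/
theorem kernel_density_estimator_consistent
    {Ω : Type*} [MeasurableSpace Ω] (P : Measure Ω) [IsProbabilityMeasure P]
    (d : ℕ) (hd : 1 ≤ d)
    (A h : ℕ → Fin d → ℝ)
    (hApos : ∀ n j, 0 < A n j) (hhpos : ∀ n j, 0 < h n j)
    (hAinf : ∀ j, Tendsto (fun n => A n j) atTop atTop)
    (hh0 : ∀ j, Tendsto (fun n => h n j) atTop (𝓝 0))
    (hnh : Tendsto (fun n : ℕ => (n : ℝ) * ∏ j, h n j) atTop atTop)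
    (X : ℕ → ℕ → Ω → (Fin d → ℝ))
    (hXmeas : ∀ n i, Measurable (X n i))
    (g : (Fin d → ℝ) → ℝ)
    (hgmeas : Measurable g) (Cg : ℝ) (hgbd : ∀ x, |g x| ≤ Cg)
    (hgnonneg : ∀ x, 0 ≤ g x)
    (hgsupp : ∀ x, x ∉ R0 d → g x = 0)
    (hgint : ∫ x : Fin d → ℝ, g x = 1)
    (hgcont : ContinuousAt g 0)
    (hXdens : ∀ n i, i < n → Measure.map (X n i) P =
      volume.withDensity (fun x =>
        ENNReal.ofReal ((∏ j, A n j)⁻¹ * g (scaled (A n) x))))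
    (hXindep : ∀ n, iIndepFun (fun i : Fin n => X n i) P)
    (K : (Fin d → ℝ) → ℝ)
    (hKmeas : Measurable K) (CK : ℝ) (hKbd : ∀ z, |K z| ≤ CK)
    (hKsupp : ∀ z, z ∉ R0 d → K z = 0)
    (hKint : ∫ z : Fin d → ℝ, K z = 1) :
    ∀ δ : ℝ, 0 < δ →
      Tendsto (fun n : ℕ =>
          (P {ω | δ < |(1 / ((n : ℝ) * ∏ j, h n j)) *
              (∑ i ∈ Finset.range n, KAh K (A n) (h n) (X n i ω)) - g 0|}).toReal)
        atTop (𝓝 0) :=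
  kernel_density_estimator_consistent_general P d A h hApos hhpos hh0 hnh X hXmeas g hgmeas Cg hgbd
    hgnonneg hgcont hXdens hXindep K hKmeas CK hKbd hKsupp hKint
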